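/- As x → ∞, logit(Φ(x)) / x² converges to 1/2. -/

import Mathlib

open Real Filter MeasureTheory
open Set

/-- The standard normal density `φ(t) = (2π)^{-1/2} exp(-t²/2)`. -/
noncomputable def stdNormalPDF (t : ℝ) : ℝ :=
  (Real.sqrt (2 * Real.pi))⁻¹ * Real.exp (-(t ^ 2) / 2)

/-- The standard normal CDF `Φ(x) = ∫_{-∞}^x φ(t) dt`. -/
noncomputable def stdNormalCDF (x : ℝ) : ℝ :=
  ∫ t in Set.Iic x, stdNormalPDF t

/-- `logit(x) = log(x) − log(1−x)`. -/
noncomputable def logit (x : ℝ) : ℝ :=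
  Real.log x - Real.log (1 - x)

lemma pdf_eq (t : ℝ) : stdNormalPDF t = (Real.sqrt (2 * Real.pi))⁻¹ * Real.exp (-(1/2) * t ^ 2) := by
  rw [stdNormalPDF]; ring_nf

lemma pdf_pos (t : ℝ) : 0 < stdNormalPDF t := by
  apply mul_pos (inv_pos.2 (Real.sqrt_pos.2 (by positivity))) (Real.exp_pos _)

lemma pdf_integrable : Integrable stdNormalPDF := by
  have := (integrable_exp_neg_mul_sq (by norm_num : (0:ℝ) < 1/2)).const_mul
    (Real.sqrt (2 * Real.pi))⁻¹
  exact this.congr (by filter_upwards with t; rw [pdf_eq])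

lemma pdf_total : ∫ t, stdNormalPDF t = 1 := by
  have h : ∫ t : ℝ, Real.exp (-(1/2) * t ^ 2) = Real.sqrt (Real.pi / (1/2)) :=
    integral_gaussian (1/2)
  have : ∫ t, stdNormalPDF t = (Real.sqrt (2 * Real.pi))⁻¹ * ∫ t : ℝ, Real.exp (-(1/2) * t ^ 2) := by
    rw [← integral_const_mul]; congr 1; ext t; rw [pdf_eq]
  rw [this, h]
  have : Real.pi / (1/2) = 2 * Real.pi := by ring
  rw [this, inv_mul_cancel₀ (by positivity)]


lemma cdf_tendsto_one : Tendsto stdNormalCDF atTop (nhds 1) := by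
  have h := (MeasureTheory.aecover_Iic (μ := (volume : Measure ℝ))
    (l := atTop) (b := fun x : ℝ => x) tendsto_id).integral_tendsto_of_countably_generated
    pdf_integrable
  rw [pdf_total] at h
  exact h

lemma tail_eq (x : ℝ) : ∫ t in Set.Ioi x, stdNormalPDF t = 1 - stdNormalCDF x := by
  have h : stdNormalCDF x + ∫ t in Set.Ioi x, stdNormalPDF t = 1 := by
    rw [stdNormalCDF, ← setIntegral_union (Iic_disjoint_Ioi le_rfl) measurableSet_Ioi
      pdf_integrable.integrableOn pdf_integrable.integrableOn, Set.Iic_union_Ioi,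
      setIntegral_univ, pdf_total]
  linarith

lemma cdf_pos (x : ℝ) : 0 < stdNormalCDF x := by
  rw [stdNormalCDF]
  rw [setIntegral_pos_iff_support_of_nonneg_ae
    (Filter.Eventually.of_forall fun t => (pdf_pos t).le) pdf_integrable.integrableOn]
  have : (Function.support stdNormalPDF) = Set.univ := by
    ext t; simp [(pdf_pos t).ne']
  rw [this, Set.univ_inter]
  simp [Real.volume_Iic]

lemma tail_pos (x : ℝ) : stdNormalCDF x < 1 := by
  have h : 0 < ∫ t in Set.Ioi x, stdNormalPDF t := by
    rw [setIntegral_pos_iff_support_of_nonneg_ae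
      (Filter.Eventually.of_forall fun t => (pdf_pos t).le) pdf_integrable.integrableOn]
    have : (Function.support stdNormalPDF) = Set.univ := by
      ext t; simp [(pdf_pos t).ne']
    rw [this, Set.univ_inter]
    simp [Real.volume_Ioi]
  rw [tail_eq] at h; linarith

lemma exp_hasDeriv (t : ℝ) :
    HasDerivAt (fun t : ℝ => Real.exp (-(t ^ 2) / 2)) (-t * Real.exp (-(t ^ 2) / 2)) t := by
  have h1 : HasDerivAt (fun t : ℝ => -(t ^ 2) / 2) (-t) t := by
    have := ((hasDerivAt_pow 2 t).neg).div_const 2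
    simpa using this.congr_deriv (by ring)
  simpa [mul_comm] using h1.exp

lemma gauss_integrable : Integrable (fun t : ℝ => Real.exp (-(t ^ 2) / 2)) := by
  have := integrable_exp_neg_mul_sq (by norm_num : (0:ℝ) < 1/2)
  exact this.congr (by filter_upwards with t; ring_nf)

lemma gauss_tendsto_zero : Tendsto (fun t : ℝ => Real.exp (-(t ^ 2) / 2)) atTop (nhds 0) := by
  apply Real.tendsto_exp_atBot.comp
  have h : Tendsto (fun t : ℝ => t ^ 2) atTop atTop :=
    tendsto_pow_atTop (by norm_num)
  have h2 : Tendsto (fun t : ℝ => -t ^ 2) atTop atBot := tendsto_neg_atBot_iff.2 h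
  exact h2.atBot_div_const (by norm_num)

lemma key_integral (x : ℝ) :
    ∫ t in Set.Ioi x, t * Real.exp (-(t ^ 2) / 2) = Real.exp (-(x ^ 2) / 2) := by
  have hderiv : ∀ t ∈ Set.Ici x, HasDerivAt (fun t : ℝ => -Real.exp (-(t ^ 2) / 2))
      (t * Real.exp (-(t ^ 2) / 2)) t := by
    intro t _
    exact (exp_hasDeriv t).neg.congr_deriv (by ring)
  have hint : IntegrableOn (fun t : ℝ => t * Real.exp (-(t ^ 2) / 2)) (Set.Ioi x) := by
    have := integrable_mul_exp_neg_mul_sq (by norm_num : (0:ℝ) < 1/2)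
    exact (this.congr (by filter_upwards with t; ring_nf)).integrableOn
  have hlim : Tendsto (fun t : ℝ => -Real.exp (-(t ^ 2) / 2)) atTop (nhds 0) := by
    simpa using gauss_tendsto_zero.neg
  have := integral_Ioi_of_hasDerivAt_of_tendsto' hderiv hint hlim
  rw [this]; ring

lemma tail_upper {x : ℝ} (hx : 0 < x) :
    1 - stdNormalCDF x ≤ (Real.sqrt (2 * Real.pi))⁻¹ / x * Real.exp (-(x ^ 2) / 2) := by
  rw [← tail_eq]
  set c := (Real.sqrt (2 * Real.pi))⁻¹ with hc
  have hcpos : 0 < c := inv_pos.2 (Real.sqrt_pos.2 (by positivity))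
  have hmono : ∫ t in Set.Ioi x, stdNormalPDF t ≤
      ∫ t in Set.Ioi x, (c / x) * (t * Real.exp (-(t ^ 2) / 2)) := by
    apply setIntegral_mono_on pdf_integrable.integrableOn _ measurableSet_Ioi
    · intro t ht
      rw [stdNormalPDF]
      have h1 : (1 : ℝ) ≤ t / x := (one_le_div hx).2 (le_of_lt ht)
      have := mul_le_mul_of_nonneg_right h1 (by positivity : 0 ≤ c * Real.exp (-(t ^ 2) / 2))
      calc c * Real.exp (-(t ^ 2) / 2) ≤ t / x * (c * Real.exp (-(t ^ 2) / 2)) := by linarith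
        _ = c / x * (t * Real.exp (-(t ^ 2) / 2)) := by ring
    · have := integrable_mul_exp_neg_mul_sq (by norm_num : (0:ℝ) < 1/2)
      exact ((this.congr (by filter_upwards with t; ring_nf)).const_mul (c / x)).integrableOn
  calc ∫ t in Set.Ioi x, stdNormalPDF t ≤ _ := hmono
    _ = c / x * Real.exp (-(x ^ 2) / 2) := by rw [integral_const_mul, key_integral]

lemma H_hasDeriv {t : ℝ} (ht : t ≠ 0) :
    HasDerivAt (fun t : ℝ => -(t⁻¹ - t⁻¹ ^ 3) * Real.exp (-(t ^ 2) / 2))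
      ((1 - 3 * t⁻¹ ^ 4) * Real.exp (-(t ^ 2) / 2)) t := by
  have hg : HasDerivAt (fun t : ℝ => -(t⁻¹ - t⁻¹ ^ 3)) (t⁻¹ ^ 2 - 3 * t⁻¹ ^ 4) t := by
    have hinv : HasDerivAt (fun t : ℝ => t⁻¹) (-(t⁻¹ ^ 2)) t := by
      simpa [inv_pow] using (hasDerivAt_inv ht)
    have hinv3 : HasDerivAt (fun t : ℝ => t⁻¹ ^ 3) (3 * t⁻¹ ^ 2 * -(t⁻¹ ^ 2)) t := by
      simpa using (hinv.fun_pow 3)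
    have := (hinv.sub hinv3).neg
    apply this.congr_deriv; ring
  have := hg.mul (exp_hasDeriv t)
  apply this.congr_deriv
  field_simp
  ring

lemma H_tendsto : Tendsto (fun t : ℝ => -(t⁻¹ - t⁻¹ ^ 3) * Real.exp (-(t ^ 2) / 2))
    atTop (nhds 0) := by
  have h1 : Tendsto (fun t : ℝ => -(t⁻¹ - t⁻¹ ^ 3)) atTop (nhds 0) := by
    have := (tendsto_inv_atTop_zero (𝕜 := ℝ)).sub ((tendsto_inv_atTop_zero (𝕜 := ℝ)).pow 3)
    simpa using this.neg
  simpa using h1.mul gauss_tendsto_zero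

lemma H'_integrable {x : ℝ} (hx : 2 ≤ x) :
    IntegrableOn (fun t : ℝ => (1 - 3 * t⁻¹ ^ 4) * Real.exp (-(t ^ 2) / 2)) (Set.Ioi x) := by
  apply Integrable.mono' gauss_integrable.integrableOn
  · apply ContinuousOn.aestronglyMeasurable _ measurableSet_Ioi
    apply ContinuousOn.mul
    · apply ContinuousOn.sub continuousOn_const
      apply ContinuousOn.mul continuousOn_const
      exact (ContinuousOn.inv₀ continuousOn_id fun t ht =>
        ne_of_gt (lt_of_lt_of_le (by norm_num) (le_of_lt (lt_of_le_of_lt hx ht)))).pow 4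
    · exact (Real.continuous_exp.comp (by continuity)).continuousOn
  · filter_upwards [ae_restrict_mem measurableSet_Ioi] with t ht
    have htpos : (2:ℝ) < t := lt_of_le_of_lt hx ht
    have h4 : 0 < t⁻¹ ^ 4 := by positivity
    have hi : t⁻¹ ≤ 1/2 := by
      rw [inv_le_comm₀ (by linarith) (by norm_num)]; norm_num; linarith
    have h4' : t⁻¹ ^ 4 ≤ (1/2 : ℝ) ^ 4 := by
      apply pow_le_pow_left₀ (by positivity) hi
    rw [Real.norm_eq_abs, abs_mul, abs_of_pos (Real.exp_pos _)]
    have : |1 - 3 * t⁻¹ ^ 4| ≤ 1 := by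
      rw [abs_le]; constructor <;> nlinarith
    nlinarith [Real.exp_pos (-(t ^ 2) / 2), abs_nonneg (1 - 3 * t⁻¹ ^ 4)]

lemma tail_lower {x : ℝ} (hx : 2 ≤ x) :
    (Real.sqrt (2 * Real.pi))⁻¹ * ((x⁻¹ - x⁻¹ ^ 3) * Real.exp (-(x ^ 2) / 2)) ≤
      1 - stdNormalCDF x := by
  rw [← tail_eq]
  set c := (Real.sqrt (2 * Real.pi))⁻¹ with hc
  have hcpos : 0 < c := inv_pos.2 (Real.sqrt_pos.2 (by positivity))
  have hkey : ∫ t in Set.Ioi x, (1 - 3 * t⁻¹ ^ 4) * Real.exp (-(t ^ 2) / 2) =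
      (x⁻¹ - x⁻¹ ^ 3) * Real.exp (-(x ^ 2) / 2) := by
    have hderiv : ∀ t ∈ Set.Ici x, HasDerivAt
        (fun t : ℝ => -(t⁻¹ - t⁻¹ ^ 3) * Real.exp (-(t ^ 2) / 2))
        ((1 - 3 * t⁻¹ ^ 4) * Real.exp (-(t ^ 2) / 2)) t := fun t ht =>
      H_hasDeriv (by have : (2:ℝ) ≤ t := le_trans hx ht; positivity)
    have := integral_Ioi_of_hasDerivAt_of_tendsto' hderiv (H'_integrable hx) H_tendsto
    rw [this]; ring
  have hmono : ∫ t in Set.Ioi x, c * ((1 - 3 * t⁻¹ ^ 4) * Real.exp (-(t ^ 2) / 2)) ≤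
      ∫ t in Set.Ioi x, stdNormalPDF t := by
    apply setIntegral_mono_on (((H'_integrable hx).const_mul c)) pdf_integrable.integrableOn
      measurableSet_Ioi
    intro t ht
    rw [stdNormalPDF, ← hc]
    have h4 : 0 ≤ t⁻¹ ^ 4 := by positivity
    have h1 : (1 - 3 * t⁻¹ ^ 4) ≤ 1 := by linarith
    have h2 := mul_le_mul_of_nonneg_right h1
      (by positivity : (0:ℝ) ≤ c * Real.exp (-(t ^ 2) / 2))
    calc c * ((1 - 3 * t⁻¹ ^ 4) * Real.exp (-(t ^ 2) / 2))
        = (1 - 3 * t⁻¹ ^ 4) * (c * Real.exp (-(t ^ 2) / 2)) := by ring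
      _ ≤ 1 * (c * Real.exp (-(t ^ 2) / 2)) := h2
      _ = c * Real.exp (-(t ^ 2) / 2) := by ring
  calc c * ((x⁻¹ - x⁻¹ ^ 3) * Real.exp (-(x ^ 2) / 2))
      = ∫ t in Set.Ioi x, c * ((1 - 3 * t⁻¹ ^ 4) * Real.exp (-(t ^ 2) / 2)) := by
        rw [integral_const_mul, hkey]
    _ ≤ _ := hmono

lemma sq_inv_tendsto : Tendsto (fun x : ℝ => (x ^ 2)⁻¹) atTop (nhds 0) :=
  tendsto_inv_atTop_zero.comp (tendsto_pow_atTop (by norm_num))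

lemma log_div_sq_tendsto : Tendsto (fun x : ℝ => Real.log x / x ^ 2) atTop (nhds 0) := by
  have h1 : Tendsto (fun x : ℝ => Real.log x / x) atTop (nhds 0) :=
    Real.isLittleO_log_id_atTop.tendsto_div_nhds_zero
  have h2 := h1.mul (tendsto_inv_atTop_zero (𝕜 := ℝ))
  rw [mul_zero] at h2
  apply h2.congr'
  filter_upwards [eventually_gt_atTop (0:ℝ)] with x hx
  rw [pow_two, ← div_div, div_eq_mul_inv (Real.log x / x)]

lemma log_one_sub_tendsto :
    Tendsto (fun x : ℝ => Real.log (1 - x⁻¹ ^ 2)) atTop (nhds 0) := by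
  have h1 : Tendsto (fun x : ℝ => 1 - x⁻¹ ^ 2) atTop (nhds 1) := by
    have := ((tendsto_inv_atTop_zero (𝕜 := ℝ)).pow 2).const_sub 1
    simpa using this
  have := (Real.continuousAt_log (by norm_num)).tendsto.comp h1
  simpa [Function.comp_def] using this

lemma const_div_sq_tendsto (a : ℝ) :
    Tendsto (fun x : ℝ => a / x ^ 2) atTop (nhds 0) := by
  have := sq_inv_tendsto.const_mul a
  rw [mul_zero] at this
  apply this.congr; intro x; rw [div_eq_mul_inv]

lemma logtail_tendsto :
    Tendsto (fun x : ℝ => Real.log (1 - stdNormalCDF x) / x ^ 2) atTop (nhds (-(1/2))) := by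
  set c := (Real.sqrt (2 * Real.pi))⁻¹ with hc
  have hcpos : 0 < c := inv_pos.2 (Real.sqrt_pos.2 (by positivity))
  apply tendsto_of_tendsto_of_tendsto_of_le_of_le'
    (g := fun x : ℝ => (Real.log c + Real.log (1 - x⁻¹ ^ 2) - Real.log x) / x ^ 2 - 1/2)
    (h := fun x : ℝ => (Real.log c - Real.log x) / x ^ 2 - 1/2)
  · -- lower limit
    have h1 := ((const_div_sq_tendsto (Real.log c)).add
      ((log_one_sub_tendsto.mul sq_inv_tendsto))).sub log_div_sq_tendsto
    simp only [mul_zero, add_zero, sub_zero, zero_sub, zero_add] at h1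
    have h2 := h1.sub_const (1/2)
    rw [zero_sub] at h2
    apply h2.congr; intro x; simp only [div_eq_mul_inv]; ring
  · -- upper limit
    have h1 := (const_div_sq_tendsto (Real.log c)).sub log_div_sq_tendsto
    rw [sub_zero] at h1
    have h2 := h1.sub_const (1/2)
    rw [zero_sub] at h2
    apply h2.congr; intro x; ring
  · -- lower bound
    filter_upwards [eventually_ge_atTop (2:ℝ)] with x hx
    have hxpos : (0:ℝ) < x := by linarith
    have hx1 : x⁻¹ ^ 2 < 1 := by
      have : x⁻¹ < 1 := by rw [inv_lt_one_iff₀]; right; linarith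
      nlinarith [inv_pos.2 hxpos]
    have hfac : x⁻¹ - x⁻¹ ^ 3 = x⁻¹ * (1 - x⁻¹ ^ 2) := by ring
    have hpos2 : 0 < x⁻¹ - x⁻¹ ^ 3 := by
      rw [hfac]; exact mul_pos (inv_pos.2 hxpos) (by linarith)
    have hlog := Real.log_le_log (mul_pos hcpos (mul_pos hpos2 (Real.exp_pos _)))
      (tail_lower (x := x) hx)
    have heq : Real.log (c * ((x⁻¹ - x⁻¹ ^ 3) * Real.exp (-(x ^ 2) / 2))) =
        Real.log c + Real.log (1 - x⁻¹ ^ 2) - Real.log x - x ^ 2 / 2 := by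
      rw [Real.log_mul hcpos.ne' (mul_pos hpos2 (Real.exp_pos _)).ne',
        Real.log_mul hpos2.ne' (Real.exp_pos _).ne',
        hfac, Real.log_mul (by positivity) (by linarith : (0:ℝ) < 1 - x⁻¹ ^ 2).ne',
        Real.log_exp]
      simp only [Real.log_inv]
      ring
    rw [heq] at hlog
    have : (Real.log c + Real.log (1 - x⁻¹ ^ 2) - Real.log x - x ^ 2 / 2) / x ^ 2 =
        (Real.log c + Real.log (1 - x⁻¹ ^ 2) - Real.log x) / x ^ 2 - 1/2 := by
      have hx2 : (x:ℝ) ^ 2 ≠ 0 := by positivity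
      field_simp
    rw [← this]
    gcongr
  · -- upper bound
    filter_upwards [eventually_ge_atTop (2:ℝ)] with x hx
    have hxpos : (0:ℝ) < x := by linarith
    have hlog := Real.log_le_log (by linarith [tail_pos x, cdf_pos x] : 0 < 1 - stdNormalCDF x)
      (tail_upper (x := x) hxpos)
    have heq : Real.log (c / x * Real.exp (-(x ^ 2) / 2)) =
        Real.log c - Real.log x - x ^ 2 / 2 := by
      rw [Real.log_mul (by positivity) (Real.exp_pos _).ne', Real.log_div hcpos.ne' hxpos.ne',
        Real.log_exp]
      ring
    rw [heq] at hlog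
    have : (Real.log c - Real.log x - x ^ 2 / 2) / x ^ 2 =
        (Real.log c - Real.log x) / x ^ 2 - 1/2 := by
      have hx2 : (x:ℝ) ^ 2 ≠ 0 := by positivity
      field_simp
    rw [← this]
    gcongr


/-- As `x → ∞`, `logit(Φ(x))/x² → 1/2`. -/
theorem tendsto_logit_cdf_div_sq :
    Tendsto (fun x : ℝ => logit (stdNormalCDF x) / x ^ 2) atTop (nhds (1 / 2)) := by
  have h1 : Tendsto (fun x : ℝ => Real.log (stdNormalCDF x) / x ^ 2) atTop (nhds 0) := by
    have hl : Tendsto (fun x : ℝ => Real.log (stdNormalCDF x)) atTop (nhds 0) := by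
      have := (Real.continuousAt_log (by norm_num : (1:ℝ) ≠ 0)).tendsto.comp cdf_tendsto_one
      simpa [Function.comp_def] using this
    have := hl.mul sq_inv_tendsto
    rw [mul_zero] at this
    apply this.congr; intro x; rw [div_eq_mul_inv]
  have h2 := h1.sub logtail_tendsto
  have : (0 : ℝ) - -(1/2) = 1/2 := by norm_num
  rw [this] at h2
  apply h2.congr; intro x
  rw [logit, sub_div]
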